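/- Consider the instance with three users u1, u2, u3 and three fogs f1, f2, f3, where every user has the same strict preference f1 ≻ f2 ≻ f3 over fogs, every fog has the same strict preference u1 ≻ u2 ≻ u3 over users, every fog has minimum quota 1 and maximum quota 2. Then there exists no assignment μ of users to fogs that simultaneously (i) assigns each fog at least 1 and at most 2 users, and (ii) admits no blocking pair. Hence the classical (maximum-quota) deferred-acceptance outcome necessarily violates the minimum quota constraint on this instance. -/

import Mathlib

/-!
Users `u1, u2, u3` and fogs `f1, f2, f3` are modeled as `Fin 3` (index 0, 1, 2).
Every user prefers fogs with lower index (`f1 ≻ f2 ≻ f3`), and every fog prefers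
users with lower index (`u1 ≻ u2 ≻ u3`).  Every fog has minimum quota 1 and
maximum quota 2.
-/

/-- The load of fog `f` under assignment `μ`: the number of users `u` with `μ u = f`. -/
def fogLoad (μ : Fin 3 → Fin 3) (f : Fin 3) : ℕ :=
  (Finset.univ.filter (fun u => μ u = f)).card

/-- `(u, f)` is a blocking pair for `μ` (with all maximum quotas equal to 2):
user `u` strictly prefers `f` to its assigned fog `μ u` (i.e. `f < μ u`), and either
`f`'s load is strictly below its maximum quota 2, or some user `u'` assigned to `f`
is less preferred by `f` than `u` (i.e. `u < u'`). -/
def BlockingPair (μ : Fin 3 → Fin 3) (u f : Fin 3) : Prop :=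
  f < μ u ∧ (fogLoad μ f < 2 ∨ ∃ u', μ u' = f ∧ u < u')

/-!
Since `f1` is every user's favourite fog, stability forces it to be full as soon as some user
sits elsewhere; the other two fogs need a user each, and `2 + 1 + 1` exceeds the three users.
-/

theorem sum_fogLoad (μ : Fin 3 → Fin 3) : ∑ f, fogLoad μ f = 3 :=
  (Finset.card_eq_sum_card_fiberwise fun _ _ => Finset.mem_univ _).symm

theorem exists_eq_of_one_le_fogLoad {μ : Fin 3 → Fin 3} {f : Fin 3} (h : 1 ≤ fogLoad μ f) :
    ∃ u, μ u = f := by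
  obtain ⟨u, hu⟩ := Finset.card_pos.mp h
  exact ⟨u, (Finset.mem_filter.mp hu).2⟩

theorem two_le_fogLoad_of_not_blockingPair {μ : Fin 3 → Fin 3} {u f : Fin 3}
    (hblock : ¬ BlockingPair μ u f) (hu : f < μ u) : 2 ≤ fogLoad μ f := by
  by_contra hlt
  exact hblock ⟨hu, Or.inl (not_le.mp hlt)⟩

/-- There is no assignment that simultaneously (i) is feasible, i.e. gives every
fog at least 1 and at most 2 users, and (ii) admits no blocking pair. -/
theorem stmt1 :
    ¬ ∃ μ : Fin 3 → Fin 3,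
        (∀ f : Fin 3, 1 ≤ fogLoad μ f ∧ fogLoad μ f ≤ 2) ∧
        (∀ u f : Fin 3, ¬ BlockingPair μ u f) := by
  rintro ⟨μ, hfeasible, hstable⟩
  obtain ⟨u, hu⟩ := exists_eq_of_one_le_fogLoad (hfeasible 1).1
  have hfull : 2 ≤ fogLoad μ 0 :=
    two_le_fogLoad_of_not_blockingPair (hstable u 0) (by rw [hu]; decide)
  have htotal := sum_fogLoad μ
  rw [Fin.sum_univ_three] at htotal
  linarith [(hfeasible 1).1, (hfeasible 2).1]
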